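/- Suppose for each $n \in \mathbb{N}\cup\{\infty\}$ we are given a sequence $(A_i^n)_{i\in\mathbb{Z}}$ of nonnegative reals with $(A_i^n) \in \ell^1(\mathbb{Z})$, and $(A_i^n) \to (A_i^\infty)$ in $\ell^1(\mathbb{Z})$ as $n\to\infty$. Then there exists a sequence of positive weights $(\omega_i)_{i\in\mathbb{Z}}$ satisfying $0 < \omega_i \leq \omega_{i+1} \leq 2^{1/2}\omega_i$ for all $i$, $\lim_{i\to+\infty}\omega_i = +\infty$, and $\sup_{n} \sum_{i=-\infty}^{+\infty} \omega_i A_i^n < \infty$. -/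

import Mathlib

/-!
Since the `A n` converge in `ℓ¹`, their tails are small uniformly in `n ∈ ℕ ∪ {∞}`, so one can
choose cut points `φ 0 < φ 1 < ⋯` beyond which every tail is at most `4⁻ᵏ`. The weight
`ω i = √2 ^ c(i)`, where `c(i)` counts the cut points `≤ i`, is monotone, grows by at most `√2`
per step and tends to infinity. Since `√2 ^ c(i) = 1 + (√2 - 1) ∑_{k < c(i)} √2 ^ k`, summing
by cut points gives `∑ ω i A i ≤ ∑ A i + ∑ₖ √2 ^ k 4⁻ᵏ ≤ ∑ A i + 2`.
-/

open Filter Topology Finset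

section Tails

variable {ι : Type*}

theorem tsum_indicator_le_add_tsum_abs_sub {f g : ι → ℝ} (hf : Summable f) (hg : Summable g)
    (S : Set ι) : ∑' i, S.indicator f i ≤ ∑' i, S.indicator g i + ∑' i, |f i - g i| := by
  have hfg : Summable (f - g) := hf.sub hg
  calc ∑' i, S.indicator f i = ∑' i, S.indicator g i + ∑' i, S.indicator (f - g) i := by
        rw [← (hg.indicator S).tsum_add (hfg.indicator S)]
        congr 1
        ext i
        by_cases hi : i ∈ S <;> simp [hi]
    _ ≤ ∑' i, S.indicator g i + ∑' i, |f i - g i| := by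
        refine (add_le_add_iff_left _).2 ((hfg.indicator S).tsum_le_tsum (fun i => ?_) hfg.abs)
        by_cases hi : i ∈ S
        · simpa [hi] using le_abs_self (f i - g i)
        · simp [hi]

theorem tendsto_tsum_indicator_Ici_atTop [Preorder ι] [NoMaxOrder ι] {f : ι → ℝ}
    (hf : Summable f) : Tendsto (fun m => ∑' i, (Set.Ici m).indicator f i) atTop (𝓝 0) := by
  have hpointwise (i : ι) : Tendsto (fun m => (Set.Ici m).indicator f i) atTop (𝓝 0) :=
    tendsto_const_nhds.congr' <| (eventually_gt_atTop i).mono fun m hm =>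
      (Set.indicator_of_notMem (fun him : m ≤ i => hm.not_ge him) f).symm
  simpa using tendsto_tsum_of_dominated_convergence hf.norm hpointwise
    (Eventually.of_forall fun m i => norm_indicator_le_norm_self _ _)

theorem eventually_forall_tsum_indicator_Ici_le [Preorder ι] [NoMaxOrder ι] {A : ℕ → ι → ℝ}
    {g : ι → ℝ} (hA : ∀ n, Summable (A n)) (hg : Summable g)
    (hconv : Tendsto (fun n => ∑' i, |A n i - g i|) atTop (𝓝 0)) {ε : ℝ} (hε : 0 < ε) :
    ∀ᶠ m in atTop, ∀ n, ∑' i, (Set.Ici m).indicator (A n) i ≤ ε := by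
  obtain ⟨N, hN⟩ := eventually_atTop.1 (hconv.eventually (gt_mem_nhds (half_pos hε)))
  have hg_tail := (tendsto_tsum_indicator_Ici_atTop hg).eventually (gt_mem_nhds (half_pos hε))
  have hA_tail : ∀ᶠ m in atTop, ∀ n ∈ range N, ∑' i, (Set.Ici m).indicator (A n) i ≤ ε :=
    (range N).eventually_all.2 fun n _ =>
      (tendsto_tsum_indicator_Ici_atTop (hA n)).eventually (ge_mem_nhds hε)
  filter_upwards [hg_tail, hA_tail] with m hgm hAm n
  rcases lt_or_ge n N with hn | hn
  · exact hAm n (mem_range.2 hn)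
  · linarith [tsum_indicator_le_add_tsum_abs_sub (hA n) hg (Set.Ici m), hN n hn]

end Tails

section CutCount

variable {φ : ℕ → ℕ}

/-- For strictly increasing `φ`, the number of `k` with `φ k ≤ i`. -/
noncomputable def cutCount (φ : ℕ → ℕ) (i : ℤ) : ℕ := sInf {k | i < φ k}

theorem lt_cutCount_iff (hφ : StrictMono φ) {k : ℕ} {i : ℤ} :
    k < cutCount φ i ↔ (φ k : ℤ) ≤ i := by
  refine ⟨fun hk => not_lt.1 (Nat.notMem_of_lt_sInf hk), fun hki => ?_⟩
  have hne : {k | i < φ k}.Nonempty :=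
    ⟨i.toNat + 1, show i < φ (i.toNat + 1) by have := hφ.le_apply (x := i.toNat + 1); omega⟩
  by_contra! hle
  have h1 : φ (cutCount φ i) ≤ φ k := hφ.monotone hle
  have h2 : i < φ (cutCount φ i) := Nat.sInf_mem hne
  omega

theorem cutCount_mono (hφ : StrictMono φ) : Monotone (cutCount φ) := fun _ _ hij =>
  le_of_forall_lt fun _ hk => (lt_cutCount_iff hφ).2 (((lt_cutCount_iff hφ).1 hk).trans hij)

theorem cutCount_add_one_le (hφ : StrictMono φ) (i : ℤ) :
    cutCount φ (i + 1) ≤ cutCount φ i + 1 := by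
  refine le_of_forall_lt fun k hk => ?_
  rcases k with _ | k
  · omega
  · have h1 := (lt_cutCount_iff hφ).1 hk
    have h2 := hφ k.lt_add_one
    have : k < cutCount φ i := (lt_cutCount_iff hφ).2 (by omega)
    omega

theorem tendsto_cutCount_atTop (hφ : StrictMono φ) : Tendsto (cutCount φ) atTop atTop :=
  tendsto_atTop_atTop.2 fun K => ⟨φ K, fun _ hi => ((lt_cutCount_iff hφ).2 hi).le⟩

theorem pow_cutCount_mul_eq (hφ : StrictMono φ) (r : ℝ) (f : ℤ → ℝ) {K : ℕ} {i : ℤ}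
    (hK : cutCount φ i ≤ K) :
    r ^ cutCount φ i * f i =
      f i + (r - 1) * ∑ k ∈ range K, r ^ k * (Set.Ici (φ k : ℤ)).indicator f i := by
  have hcut : ∑ k ∈ range K, r ^ k * (Set.Ici (φ k : ℤ)).indicator f i =
      ∑ k ∈ range (cutCount φ i), r ^ k * f i := by
    rw [← sum_subset (range_subset_range.2 hK) fun k _ hk => ?_]
    · refine sum_congr rfl fun k hk => ?_
      rw [Set.indicator_of_mem (Set.mem_Ici.2 ((lt_cutCount_iff hφ).1 (mem_range.1 hk)))]
    · rw [Set.indicator_of_notMem (mt ((lt_cutCount_iff hφ).2 ∘ Set.mem_Ici.1) (by simpa using hk)),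
        mul_zero]
  rw [hcut, ← sum_mul, ← mul_assoc, mul_comm (r - 1), geom_sum_mul]
  ring

variable {r : ℝ} {f : ℤ → ℝ}

theorem sum_pow_cutCount_mul_le (hφ : StrictMono φ) (hr1 : 1 ≤ r) (hr2 : r ≤ 2)
    (hf0 : ∀ i, 0 ≤ f i) (hf : Summable f)
    (htail : ∀ k, ∑' i, (Set.Ici (φ k : ℤ)).indicator f i ≤ (1 / 4) ^ k) (s : Finset ℤ) :
    ∑ i ∈ s, r ^ cutCount φ i * f i ≤ ∑' i, f i + 2 := by
  set K := s.sup (cutCount φ)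
  have hblock (k : ℕ) : r ^ k * ∑ i ∈ s, (Set.Ici (φ k : ℤ)).indicator f i ≤ (1 / 2) ^ k :=
    calc r ^ k * ∑ i ∈ s, (Set.Ici (φ k : ℤ)).indicator f i ≤ 2 ^ k * (1 / 4) ^ k := by
          gcongr
          · exact sum_nonneg fun i _ => Set.indicator_nonneg (fun i _ => hf0 i) i
          · exact ((hf.indicator _).sum_le_tsum s fun i _ =>
              Set.indicator_nonneg (fun i _ => hf0 i) i).trans (htail k)
      _ = (1 / 2) ^ k := by rw [← mul_pow]; norm_num
  calc ∑ i ∈ s, r ^ cutCount φ i * f i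
      = ∑ i ∈ s, f i +
          (r - 1) * ∑ k ∈ range K, r ^ k * ∑ i ∈ s, (Set.Ici (φ k : ℤ)).indicator f i := by
        rw [sum_congr rfl fun i hi => pow_cutCount_mul_eq hφ r f (le_sup hi (f := cutCount φ)),
          sum_add_distrib]
        simp only [mul_sum]
        rw [sum_comm]
    _ ≤ ∑' i, f i + 1 * ∑ k ∈ range K, (1 / 2) ^ k := by
        gcongr with k
        · exact hf.sum_le_tsum s fun i _ => hf0 i
        · exact sum_nonneg fun k _ => mul_nonneg (by positivity)
            (sum_nonneg fun i _ => Set.indicator_nonneg (fun i _ => hf0 i) i)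
        · linarith
        · exact hblock k
    _ ≤ ∑' i, f i + 2 := by linarith [sum_geometric_two_le K]

theorem summable_pow_cutCount_mul_and_tsum_le (hφ : StrictMono φ) (hr1 : 1 ≤ r) (hr2 : r ≤ 2)
    (hf0 : ∀ i, 0 ≤ f i) (hf : Summable f)
    (htail : ∀ k, ∑' i, (Set.Ici (φ k : ℤ)).indicator f i ≤ (1 / 4) ^ k) :
    Summable (fun i => r ^ cutCount φ i * f i) ∧
      ∑' i, r ^ cutCount φ i * f i ≤ ∑' i, f i + 2 := by
  have hbound := sum_pow_cutCount_mul_le hφ hr1 hr2 hf0 hf htail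
  have hsum := summable_of_sum_le (fun i => mul_nonneg (pow_nonneg (by linarith) _) (hf0 i)) hbound
  exact ⟨hsum, hsum.tsum_le_of_sum_le hbound⟩

end CutCount

/-- Frequency-envelope weight construction: if the nonnegative sequences
`(A n)_{n ∈ ℕ}` converge in `ℓ¹(ℤ)` to `Ainf`, then there is a positive weight `ω`
with `ω i ≤ ω (i+1) ≤ 2^(1/2) ω i`, `ω i → ∞` as `i → +∞`, and a uniform bound on
`∑ ω i * A n i` over all `n ∈ ℕ ∪ {∞}`. -/
theorem stmt1 (A : ℕ → ℤ → ℝ) (Ainf : ℤ → ℝ)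
    (hpos : ∀ n i, 0 ≤ A n i) (hposInf : ∀ i, 0 ≤ Ainf i)
    (hsum : ∀ n, Summable (A n)) (hsumInf : Summable Ainf)
    (hconv : Tendsto (fun n => ∑' i, |A n i - Ainf i|) atTop (nhds 0)) :
    ∃ ω : ℤ → ℝ, (∀ i, 0 < ω i) ∧ (∀ i, ω i ≤ ω (i + 1)) ∧
      (∀ i, ω (i + 1) ≤ 2 ^ ((1 : ℝ) / 2) * ω i) ∧
      Tendsto ω atTop atTop ∧
      ∃ M : ℝ, (∀ n, Summable (fun i => ω i * A n i) ∧ ∑' i, ω i * A n i ≤ M) ∧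
        Summable (fun i => ω i * Ainf i) ∧ ∑' i, ω i * Ainf i ≤ M := by
  set r : ℝ := 2 ^ ((1 : ℝ) / 2)
  have hr1 : 1 < r := Real.one_lt_rpow (by norm_num) (by norm_num)
  have hr2 : r ≤ 2 :=
    calc r ≤ 2 ^ (1 : ℝ) := Real.rpow_le_rpow_of_exponent_le (by norm_num) (by norm_num)
      _ = 2 := Real.rpow_one 2
  obtain ⟨D, hD⟩ := hconv.bddAbove_range
  have hD0 : 0 ≤ D := (tsum_nonneg fun _ => abs_nonneg _).trans (hD (Set.mem_range_self 0))
  obtain ⟨φ, hφ, hφtail⟩ := extraction_forall_of_eventually fun k : ℕ =>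
    have hquarter : (0 : ℝ) < (1 / 4) ^ k := by positivity
    tendsto_natCast_atTop_atTop.eventually <|
      (eventually_forall_tsum_indicator_Ici_le hsum hsumInf hconv hquarter).and
        ((tendsto_tsum_indicator_Ici_atTop hsumInf).eventually (ge_mem_nhds hquarter))
  refine ⟨fun i => r ^ cutCount φ i, fun i => by positivity,
    fun i => pow_le_pow_right₀ hr1.le (cutCount_mono hφ (by omega)), fun i => ?_,
    (tendsto_pow_atTop_atTop_of_one_lt hr1).comp (tendsto_cutCount_atTop hφ),
    ∑' i, Ainf i + D + 2, fun n => ?_, ?_⟩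
  · calc r ^ cutCount φ (i + 1) ≤ r ^ (cutCount φ i + 1) :=
          pow_le_pow_right₀ hr1.le (cutCount_add_one_le hφ i)
      _ = r * r ^ cutCount φ i := pow_succ' _ _
  · obtain ⟨hs, hle⟩ := summable_pow_cutCount_mul_and_tsum_le hφ hr1.le hr2 (hpos n) (hsum n)
      fun k => (hφtail k).1 n
    have hnorm := tsum_indicator_le_add_tsum_abs_sub (hsum n) hsumInf Set.univ
    simp only [Set.indicator_univ] at hnorm
    exact ⟨hs, by linarith [hD (Set.mem_range_self n)]⟩
  · obtain ⟨hs, hle⟩ := summable_pow_cutCount_mul_and_tsum_le hφ hr1.le hr2 hposInf hsumInf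
      fun k => (hφtail k).2
    exact ⟨hs, by linarith⟩
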